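/- Let p be a weighted homogeneous real polynomial of weight 1 on ℂ^n with p ≥ 0 everywhere, and suppose p does not vanish identically on any orbit of the weighted dilations D_τ(z) = (τ^{δ₁}z₁,…,τ^{δ_n}z_n), τ > 0, other than {0}. If the balanced part p⁽⁰⁾ satisfies p⁽⁰⁾(z₀) = 0 for some z₀ ≠ 0, then p vanishes on the entire dilation orbit {D_τ(z₀) : τ > 0} — a contradiction; hence p⁽⁰⁾(z) > 0 for all z ≠ 0, and consequently every sublevel set {p⁽⁰⁾ ≤ c} is compact. -/

import Mathlib

/-!
A zero of `p` at `z ≠ 0` would, by homogeneity, spread over the whole dilation orbit of `z`; so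
`p > 0` off the origin, and so is its circle average `p⁽⁰⁾`, whose integrand is positive at
`θ = 0`. As `p⁽⁰⁾` is again weighted homogeneous, rescaling onto the compact level set `{r = 1}` of
the weighted radius `r` gives `p⁽⁰⁾ ≥ m · r` with `m > 0`, and the sublevel sets of `r` are compact.
-/

open Complex

/-- The symmetrization (average over the weighted circle action, period `2πN` for
commensurable weights `δⱼ = aⱼ/N`) of a function `p` on ℂⁿ. -/
noncomputable def symmAvg {n : ℕ} (N : ℕ) (δ : Fin n → ℝ) (p : (Fin n → ℂ) → ℝ)
    (z : Fin n → ℂ) : ℝ :=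
  (1 / (2 * Real.pi * N)) *
    ∫ θ in (0:ℝ)..(2 * Real.pi * N), p (fun j => Complex.exp (I * δ j * θ) * z j)

section WeightedDilation

variable {ι : Type*} {δ : ι → ℝ}

noncomputable def weightedDilation (δ : ι → ℝ) (τ : ℝ) (z : ι → ℂ) : ι → ℂ :=
  fun j => ((τ ^ δ j : ℝ) : ℂ) * z j

/-- The weighted radius `r(z)`, taken as a sum rather than a maximum so that `ι` may be empty. -/
noncomputable def weightedRadius [Fintype ι] (δ : ι → ℝ) (z : ι → ℂ) : ℝ :=
  ∑ j, ‖z j‖ ^ (δ j)⁻¹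

lemma weightedDilation_weightedDilation {s t : ℝ} (hs : 0 ≤ s) (ht : 0 ≤ t) (z : ι → ℂ) :
    weightedDilation δ s (weightedDilation δ t z) = weightedDilation δ (s * t) z := by
  funext j
  simp only [weightedDilation, Real.mul_rpow hs ht, ofReal_mul]
  ring

lemma weightedDilation_one (z : ι → ℂ) : weightedDilation δ 1 z = z := by
  funext j
  simp [weightedDilation]

lemma weightedRadius_weightedDilation [Fintype ι] (hδ : ∀ j, 0 < δ j) {τ : ℝ} (hτ : 0 ≤ τ)
    (z : ι → ℂ) :
    weightedRadius δ (weightedDilation δ τ z) = τ * weightedRadius δ z := by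
  simp only [weightedRadius, weightedDilation, Finset.mul_sum, norm_mul, norm_real,
    Real.norm_eq_abs, abs_of_nonneg (Real.rpow_nonneg hτ _)]
  refine Finset.sum_congr rfl fun j _ => ?_
  rw [Real.mul_rpow (Real.rpow_nonneg hτ _) (norm_nonneg _),
    Real.rpow_rpow_inv hτ (hδ j).ne']

lemma continuous_weightedRadius [Fintype ι] (hδ : ∀ j, 0 < δ j) : Continuous (weightedRadius δ) :=
  continuous_finsetSum _ fun j _ =>
    (Real.continuous_rpow_const (inv_nonneg.2 (hδ j).le)).comp (continuous_apply j).norm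

lemma weightedRadius_zero [Fintype ι] (hδ : ∀ j, 0 < δ j) : weightedRadius δ 0 = 0 := by
  simp [weightedRadius, Real.zero_rpow (inv_ne_zero (hδ _).ne')]

lemma weightedRadius_pos [Fintype ι] {z : ι → ℂ} (hz : z ≠ 0) : 0 < weightedRadius δ z := by
  obtain ⟨j, hj⟩ := Function.ne_iff.1 hz
  exact Finset.sum_pos' (fun i _ => Real.rpow_nonneg (norm_nonneg _) _)
    ⟨j, Finset.mem_univ j, Real.rpow_pos_of_pos (norm_pos_iff.2 hj) _⟩

lemma isCompact_weightedRadius_le [Fintype ι] (hδ : ∀ j, 0 < δ j) (R : ℝ) :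
    IsCompact {z : ι → ℂ | weightedRadius δ z ≤ R} := by
  refine (isCompact_univ_pi fun j => isCompact_closedBall (0 : ℂ) (R ^ δ j)).of_isClosed_subset
    (isClosed_le (continuous_weightedRadius hδ) continuous_const) fun z (hz : _ ≤ R) j _ => ?_
  have hterm : ‖z j‖ ^ (δ j)⁻¹ ≤ R :=
    (Finset.single_le_sum (f := fun i => ‖z i‖ ^ (δ i)⁻¹)
      (fun i _ => Real.rpow_nonneg (norm_nonneg _) _) (Finset.mem_univ j)).trans hz
  rw [mem_closedBall_zero_iff]
  exact (Real.rpow_inv_le_iff_of_pos (norm_nonneg _)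
    ((Real.rpow_nonneg (norm_nonneg _) _).trans hterm) (hδ j)).1 hterm

theorem isCompact_sublevel_of_weightedHomogeneous [Fintype ι] (hδ : ∀ j, 0 < δ j)
    {q : (ι → ℂ) → ℝ} (hq : Continuous q) (hqpos : ∀ z, z ≠ 0 → 0 < q z)
    (hhom : ∀ τ : ℝ, 0 < τ → ∀ z, q (weightedDilation δ τ z) = τ * q z) (c : ℝ) :
    IsCompact {z | q z ≤ c} := by
  set S := {z : ι → ℂ | weightedRadius δ z = 1}
  have hS : IsCompact S := (isCompact_weightedRadius_le hδ 1).of_isClosed_subset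
    (isClosed_eq (continuous_weightedRadius hδ) continuous_const) fun z hz => hz.le
  obtain ⟨m, hm, hmS⟩ := hS.exists_forall_le' hq.continuousOn fun z hz =>
    hqpos z fun h0 => by simp [S, h0, weightedRadius_zero hδ] at hz
  have hq0 : q 0 = 0 := by
    have h2 := hhom 2 two_pos 0
    rw [show weightedDilation δ 2 0 = 0 from funext fun j => by simp [weightedDilation]] at h2
    linarith
  have hlower : ∀ z, m * weightedRadius δ z ≤ q z := by
    intro z
    rcases eq_or_ne z 0 with rfl | hz
    · simp [hq0, weightedRadius_zero hδ]
    set r := weightedRadius δ z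
    have hr : 0 < r := weightedRadius_pos hz
    have hw : weightedDilation δ r⁻¹ z ∈ S := by
      show weightedRadius δ _ = 1
      rw [weightedRadius_weightedDilation hδ (inv_nonneg.2 hr.le), inv_mul_cancel₀ hr.ne']
    calc m * r ≤ r * q (weightedDilation δ r⁻¹ z) := by rw [mul_comm]; gcongr; exact hmS _ hw
      _ = q z := by
        rw [← hhom r hr, weightedDilation_weightedDilation hr.le (inv_nonneg.2 hr.le),
          mul_inv_cancel₀ hr.ne', weightedDilation_one]
  refine (isCompact_weightedRadius_le hδ (c / m)).of_isClosed_subset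
    (isClosed_le hq continuous_const) fun z hz => ?_
  rw [Set.mem_ofPred_eq, le_div_iff₀' hm]
  exact (hlower z).trans hz

end WeightedDilation

section symmAvg

variable {n : ℕ} {δ : Fin n → ℝ} {p : (Fin n → ℂ) → ℝ}

lemma continuous_symmAvg (N : ℕ) (hp : Continuous p) : Continuous (symmAvg N δ p) :=
  continuous_const.mul <|
    intervalIntegral.continuous_parametric_intervalIntegral_of_continuous' (by fun_prop) _ _

lemma symmAvg_weightedDilation (N : ℕ)
    (hhom : ∀ τ : ℝ, 0 < τ → ∀ z, p (weightedDilation δ τ z) = τ * p z)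
    {τ : ℝ} (hτ : 0 < τ) (z : Fin n → ℂ) :
    symmAvg N δ p (weightedDilation δ τ z) = τ * symmAvg N δ p z := by
  have hrot : ∀ θ : ℝ, p (fun j => exp (I * δ j * θ) * weightedDilation δ τ z j)
      = τ * p (fun j => exp (I * δ j * θ) * z j) := fun θ => by
    rw [← hhom τ hτ]
    congr 1
    funext j
    simp only [weightedDilation]
    ring
  simp only [symmAvg, hrot, intervalIntegral.integral_const_mul]
  ring

lemma symmAvg_pos {N : ℕ} (hN : 0 < N) (hp : Continuous p) (hpos : ∀ z, 0 ≤ p z)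
    {z : Fin n → ℂ} (hz : 0 < p z) : 0 < symmAvg N δ p z := by
  have hL : 0 < 2 * Real.pi * N := by positivity
  refine mul_pos (by positivity) (intervalIntegral.integral_pos hL (by fun_prop)
    (fun θ _ => hpos _) ⟨0, ⟨le_rfl, hL.le⟩, ?_⟩)
  simpa using hz

end symmAvg

/-- Let `p ≥ 0` be a continuous weighted homogeneous real polynomial function of weight 1
on ℂⁿ which does not vanish identically on any weighted dilation orbit
`{D_τ(z₀) : τ > 0}` with `z₀ ≠ 0`.  Then the balanced part `p⁽⁰⁾` (the symmetrization of
`p`) is strictly positive off the origin, and every sublevel set `{p⁽⁰⁾ ≤ c}` is compact. -/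
theorem stmt_16 (n : ℕ) (N : ℕ) (hN : 0 < N) (a : Fin n → ℕ) (ha : ∀ j, 0 < a j)
    (δ : Fin n → ℝ) (hδ : ∀ j, δ j = (a j : ℝ) / N)
    (p : (Fin n → ℂ) → ℝ) (hp : Continuous p) (hpos : ∀ z, 0 ≤ p z)
    -- weighted homogeneity of weight 1:
    (hhom : ∀ τ : ℝ, 0 < τ → ∀ z : Fin n → ℂ,
      p (fun j => ((τ ^ δ j : ℝ) : ℂ) * z j) = τ * p z)
    -- p does not vanish identically on any nontrivial dilation orbit:
    (hnv : ∀ z : Fin n → ℂ, z ≠ 0 → ∃ τ : ℝ, 0 < τ ∧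
      p (fun j => ((τ ^ δ j : ℝ) : ℂ) * z j) ≠ 0) :
    (∀ z : Fin n → ℂ, z ≠ 0 → 0 < symmAvg N δ p z) ∧
    (∀ c : ℝ, IsCompact {z : Fin n → ℂ | symmAvg N δ p z ≤ c}) := by
  have hδpos : ∀ j, 0 < δ j := fun j => by
    rw [hδ j]
    exact div_pos (Nat.cast_pos.2 (ha j)) (Nat.cast_pos.2 hN)
  have hp_pos : ∀ z, z ≠ 0 → 0 < p z := fun z hz => by
    obtain ⟨τ, hτ, hne⟩ := hnv z hz
    rw [hhom τ hτ] at hne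
    exact (hpos z).lt_of_ne' (right_ne_zero_of_mul hne)
  have hq_pos : ∀ z, z ≠ 0 → 0 < symmAvg N δ p z := fun z hz =>
    symmAvg_pos hN hp hpos (hp_pos z hz)
  exact ⟨hq_pos, isCompact_sublevel_of_weightedHomogeneous hδpos (continuous_symmAvg N hp) hq_pos
    fun _ hτ => symmAvg_weightedDilation N hhom hτ⟩
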